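/- arXiv:0805.4166 — 5 statements merged into one kernel-verified Lean document; each statement's English description precedes it below -/
import Mathlib

section
/- Define s(z) = (z² − 1)·z^{−2}·sin(π z²/2) for z ≠ 0 (extended as an entire function, since sin(π z²/2) has a double zero at 0). Then for every ε > 0 there exist constants 0 < c ≤ C such that |s(r e^{iθ})| is bounded between c·exp((π/2) r² |sin 2θ|) and C·exp((π/2) r² |sin 2θ|) for all r ≥ 1 and θ with dist(r e^{iθ}, Λ) > ε r^{−1/2}, where Λ is the zero set of s. -/
/-!
Write u = z². Since |sin(x + iy)|² = sin² x + sinh² y, one has |sin(πu/2)| ≤ exp |Im(πu/2)|, and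
Im(πu/2) = (π/2) r² sin 2θ on z = r e^{iθ}; with |1 − z⁻²| ≤ 2 this is the upper bound.

For the lower bound: if |Im(πu/2)| ≥ 1 the sinh term alone gives |sin(πu/2)| ≥ exp |Im(πu/2)| / 4;
otherwise Jordan's inequality gives |sin(πu/2)| ≥ dist(u, 2ℤ). Each 2m ≠ 0 equals a² with ±a ∈ Λ,
and |z² − a²| = |z − a| |z + a| ≥ ε r^{-1/2} · max(|z − a|, |z + a|) ≥ ε r^{-1/2} · r ≥ ε. Hence u
stays at distance min(1, ε) from 2ℤ, and, taking a = 1, |1 − z⁻²| = |z² − 1| / r² is bounded below.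
-/

open Complex Real

/-- The zero set of s(z) = (z²−1) z^{−2} sin(πz²/2):
Λ = {−1, 1} ∪ {±√(2n) : n ≥ 1} ∪ {±i√(2n) : n ≥ 1}. -/
def GaborLambda : Set ℂ :=
  {-1, 1} ∪ (⋃ n : ℕ, if 1 ≤ n then
    {(Real.sqrt (2 * n) : ℂ), -(Real.sqrt (2 * n) : ℂ),
     Complex.I * Real.sqrt (2 * n), -(Complex.I * Real.sqrt (2 * n))} else ∅)

lemma Complex.norm_sin_sq (w : ℂ) :
    ‖Complex.sin w‖ ^ 2 = Real.sin w.re ^ 2 + Real.sinh w.im ^ 2 := by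
  conv_lhs => rw [← w.re_add_im]
  rw [Complex.sin_add, Complex.sin_mul_I, Complex.cos_mul_I, Complex.sq_norm]
  simp [Complex.normSq_apply, ← Complex.ofReal_sin, ← Complex.ofReal_cos,
    ← Complex.ofReal_sinh, ← Complex.ofReal_cosh]
  nlinarith [Real.sin_sq_add_cos_sq w.re, Real.cosh_sq w.im]

lemma Complex.norm_sin_le_exp_abs_im (w : ℂ) : ‖Complex.sin w‖ ≤ Real.exp |w.im| := by
  have hcosh : Real.cosh w.im ≤ Real.exp |w.im| := by
    rw [← Real.cosh_abs, Real.cosh_eq]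
    linarith [Real.exp_le_exp.mpr (show -|w.im| ≤ |w.im| by linarith [abs_nonneg w.im])]
  refine le_trans ((sq_le_sq₀ (norm_nonneg _) (Real.cosh_pos _).le).mp ?_) hcosh
  rw [Complex.norm_sin_sq, Real.cosh_sq]
  nlinarith [Real.sin_sq_le_one w.re]

lemma Real.exp_div_four_le_sinh {x : ℝ} (hx : 1 ≤ x) : Real.exp x / 4 ≤ Real.sinh x := by
  have h : Real.exp (-x) ≤ Real.exp x / 2 := by
    rw [Real.exp_neg, inv_le_iff_one_le_mul₀ (Real.exp_pos x)]
    nlinarith [Real.add_one_le_exp x]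
  rw [Real.sinh_eq]
  linarith

lemma Complex.im_pi_mul_div_two (u : ℂ) : (π * u / 2).im = π / 2 * u.im := by
  simp; ring

lemma exists_int_norm_sub_le_norm_sin (u : ℂ) :
    ∃ m : ℤ, ‖u - 2 * m‖ ≤ ‖Complex.sin (π * u / 2)‖ := by
  set m := round (u.re / 2)
  set t := u.re - 2 * m with ht_def
  refine ⟨m, (sq_le_sq₀ (norm_nonneg _) (norm_nonneg _)).mp ?_⟩
  have ht : |t| ≤ 1 := by
    have := abs_sub_round (u.re / 2)
    rw [show t = 2 * (u.re / 2 - m) by ring, abs_mul, abs_two]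
    linarith
  have hre : |t| ≤ |Real.sin (π / 2 * u.re)| := by
    have hjordan := Real.mul_abs_le_abs_sin (x := π / 2 * t)
      (by rw [abs_mul, abs_of_pos (by positivity)]; nlinarith [Real.pi_pos])
    rw [show π / 2 * u.re = π / 2 * t + m * π by ring, Real.sin_add_int_mul_pi, abs_mul,
      abs_neg_one_zpow, one_mul]
    rwa [abs_mul, abs_of_pos (by positivity), ← mul_assoc, div_mul_div_cancel₀ Real.pi_ne_zero,
      div_self two_ne_zero, one_mul] at hjordan
  have him : |u.im| ≤ |Real.sinh (π / 2 * u.im)| := by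
    rw [Real.abs_sinh]
    refine le_trans ?_ (Real.self_le_sinh_iff.mpr (abs_nonneg _))
    rw [abs_mul, abs_of_pos (by positivity : (0:ℝ) < π / 2)]
    nlinarith [Real.pi_gt_three, abs_nonneg u.im]
  rw [Complex.norm_sin_sq, Complex.sq_norm, Complex.normSq_apply]
  have hre' : (π * u / 2).re = π / 2 * u.re := by simp; ring
  simp only [hre', Complex.im_pi_mul_div_two, Complex.sub_re, Complex.sub_im]
  simp only [Complex.mul_re, Complex.mul_im, Complex.intCast_re, Complex.intCast_im,
    Complex.re_ofNat, Complex.im_ofNat, mul_zero, zero_mul, sub_zero, add_zero, ← ht_def]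
  nlinarith [sq_le_sq.mpr hre, sq_le_sq.mpr him]

lemma le_norm_sin_pi_mul_div_two {u : ℂ} {δ : ℝ} (hδ : 0 ≤ δ)
    (hsep : ∀ m : ℤ, δ ≤ ‖u - 2 * m‖) :
    min (1 / 4) (δ / Real.exp 1) * Real.exp |(π * u / 2).im| ≤ ‖Complex.sin (π * u / 2)‖ := by
  set y := (π * u / 2).im
  rcases le_or_gt 1 |y| with hy | hy
  · have hsinh : Real.sinh |y| ≤ ‖Complex.sin (π * u / 2)‖ := by
      rw [← Real.abs_sinh, ← sq_le_sq₀ (abs_nonneg _) (norm_nonneg _), sq_abs,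
        Complex.norm_sin_sq]
      nlinarith [sq_nonneg (Real.sin (π * u / 2).re)]
    calc min (1 / 4) (δ / Real.exp 1) * Real.exp |y| ≤ 1 / 4 * Real.exp |y| := by
          gcongr; exact min_le_left _ _
      _ = Real.exp |y| / 4 := by ring
      _ ≤ _ := (Real.exp_div_four_le_sinh hy).trans hsinh
  · obtain ⟨m, hm⟩ := exists_int_norm_sub_le_norm_sin u
    calc min (1 / 4) (δ / Real.exp 1) * Real.exp |y| ≤ δ / Real.exp 1 * Real.exp 1 := by
          gcongr
          exact min_le_right _ _
      _ = δ := div_mul_cancel₀ δ (Real.exp_ne_zero 1)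
      _ ≤ _ := (hsep m).trans hm

lemma mul_norm_le_norm_sq_sub_sq {𝕜 : Type*} [RCLike 𝕜] {z a : 𝕜} {d : ℝ} (hd : 0 ≤ d)
    (h₁ : d ≤ ‖z - a‖) (h₂ : d ≤ ‖z + a‖) : d * ‖z‖ ≤ ‖z ^ 2 - a ^ 2‖ := by
  have htri := norm_add_le (z - a) (z + a)
  rw [show z - a + (z + a) = 2 * z by ring, norm_mul, RCLike.norm_two] at htri
  rw [show z ^ 2 - a ^ 2 = (z - a) * (z + a) by ring, norm_mul]
  nlinarith [norm_nonneg (z - a), norm_nonneg (z + a)]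

lemma le_norm_sq_sub_sq {𝕜 : Type*} [RCLike 𝕜] {z a : 𝕜} {ε r : ℝ} (hε : 0 ≤ ε) (hr : 1 ≤ r)
    (hz : ‖z‖ = r) (h₁ : ε * r ^ (-(1 : ℝ) / 2) < ‖z - a‖)
    (h₂ : ε * r ^ (-(1 : ℝ) / 2) < ‖z + a‖) : ε ≤ ‖z ^ 2 - a ^ 2‖ :=
  calc ε ≤ ε * r ^ ((1 : ℝ) / 2) := le_mul_of_one_le_right hε (Real.one_le_rpow hr (by norm_num))
    _ = ε * r ^ (-(1 : ℝ) / 2) * ‖z‖ := by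
        rw [hz, mul_assoc, ← Real.rpow_add_one (by positivity)]; norm_num
    _ ≤ ‖z ^ 2 - a ^ 2‖ := mul_norm_le_norm_sq_sub_sq (by positivity) h₁.le h₂.le

lemma neg_mem_gaborLambda {a : ℂ} (ha : a ∈ GaborLambda) : -a ∈ GaborLambda := by
  simp only [GaborLambda, Set.mem_union, Set.mem_insert_iff, Set.mem_singleton_iff,
    Set.mem_iUnion] at ha ⊢
  rcases ha with (rfl | rfl) | ⟨n, hn⟩
  · simp
  · simp
  · refine Or.inr ⟨n, ?_⟩
    split_ifs at hn ⊢
    · simp only [Set.mem_insert_iff, Set.mem_singleton_iff] at hn ⊢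
      rcases hn with rfl | rfl | rfl | rfl <;> simp
    · exact hn

lemma ofReal_sqrt_mem_gaborLambda {n : ℕ} (hn : 1 ≤ n) :
    ((Real.sqrt (2 * n) : ℝ) : ℂ) ∈ GaborLambda :=
  Set.mem_union_right _ (Set.mem_iUnion.mpr ⟨n, by simp [hn]⟩)

lemma I_mul_ofReal_sqrt_mem_gaborLambda {n : ℕ} (hn : 1 ≤ n) :
    I * ((Real.sqrt (2 * n) : ℝ) : ℂ) ∈ GaborLambda :=
  Set.mem_union_right _ (Set.mem_iUnion.mpr ⟨n, by simp [hn]⟩)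

lemma exists_mem_gaborLambda_sq_eq {m : ℤ} (hm : m ≠ 0) :
    ∃ a ∈ GaborLambda, a ^ 2 = 2 * m := by
  have hk : 1 ≤ m.natAbs := Int.natAbs_pos.mpr hm
  have hsq : ((Real.sqrt (2 * m.natAbs) : ℝ) : ℂ) ^ 2 = 2 * |m| := by
    rw [← Complex.ofReal_pow, Real.sq_sqrt (by positivity)]
    push_cast
    rw [Nat.cast_natAbs]
  rcases hm.lt_or_gt with hneg | hpos
  · refine ⟨_, I_mul_ofReal_sqrt_mem_gaborLambda hk, ?_⟩
    rw [mul_pow, hsq, I_sq, abs_of_neg hneg]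
    push_cast
    ring
  · exact ⟨_, ofReal_sqrt_mem_gaborLambda hk, by rw [hsq, abs_of_pos hpos]⟩

lemma le_norm_sq_sub_two_mul_int {z : ℂ} {ε r : ℝ} (hε : 0 ≤ ε) (hr : 1 ≤ r) (hz : ‖z‖ = r)
    (hdist : ∀ lam ∈ GaborLambda, ε * r ^ (-(1 : ℝ) / 2) < ‖z - lam‖) (m : ℤ) :
    min 1 ε ≤ ‖z ^ 2 - 2 * m‖ := by
  rcases eq_or_ne m 0 with rfl | hm
  · rw [Int.cast_zero, mul_zero, sub_zero, norm_pow, hz]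
    exact (min_le_left _ _).trans (one_le_pow₀ hr)
  · obtain ⟨a, ha, ha2⟩ := exists_mem_gaborLambda_sq_eq hm
    rw [← ha2]
    refine (min_le_right _ _).trans (le_norm_sq_sub_sq hε hr hz (hdist a ha) ?_)
    simpa using hdist (-a) (neg_mem_gaborLambda ha)

section NormSubOne

variable {R : Type*} [SeminormedRing R] [NormOneClass R] {w : R}

lemma norm_sub_one_div_norm_le_two (hw : 1 ≤ ‖w‖) : ‖w - 1‖ / ‖w‖ ≤ 2 := by
  rw [div_le_iff₀ (by linarith)]
  linarith [norm_sub_le w 1, norm_one (α := R)]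

lemma min_le_norm_sub_one_div_norm {δ : ℝ} (hw : 1 ≤ ‖w‖) (hδ : δ ≤ ‖w - 1‖) :
    min (1 / 2) (δ / 2) ≤ ‖w - 1‖ / ‖w‖ := by
  rw [le_div_iff₀ (by linarith)]
  rcases le_or_gt 2 ‖w‖ with h | h
  · have := norm_sub_norm_le w 1
    rw [norm_one] at this
    nlinarith [min_le_left (1 / 2 : ℝ) (δ / 2)]
  · nlinarith [min_le_right (1 / 2 : ℝ) (δ / 2), norm_nonneg (w - 1)]

end NormSubOne

lemma norm_ofReal_mul_exp_I_mul {r : ℝ} (hr : 0 ≤ r) (θ : ℝ) :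
    ‖(r : ℂ) * Complex.exp (I * θ)‖ = r := by
  rw [norm_mul, mul_comm I, Complex.norm_exp_ofReal_mul_I, Complex.norm_real,
    Real.norm_of_nonneg hr, mul_one]

lemma abs_im_pi_mul_sq_div_two (r θ : ℝ) :
    |(π * ((r : ℂ) * Complex.exp (I * θ)) ^ 2 / 2).im| = π / 2 * r ^ 2 * |Real.sin (2 * θ)| := by
  rw [Complex.im_pi_mul_div_two, mul_pow, ← Complex.exp_nat_mul, ← Complex.ofReal_pow,
    Complex.im_ofReal_mul, show ((2 : ℕ) : ℂ) * (I * θ) = ((2 * θ : ℝ) : ℂ) * I by push_cast; ring,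
    Complex.exp_ofReal_mul_I_im, abs_mul, abs_mul, abs_of_pos (by positivity : (0 : ℝ) < π / 2),
    abs_of_nonneg (sq_nonneg r), mul_assoc]

theorem s_estimate_away_from_zeros_general (s : ℂ → ℂ)
    (hs_eq : ∀ z : ℂ, z ≠ 0 → s z = (z ^ 2 - 1) / z ^ 2 * Complex.sin (π * z ^ 2 / 2))
    (ε : ℝ) (hε : 0 < ε) :
    ∃ c C : ℝ, 0 < c ∧ c ≤ C ∧
      ∀ r θ : ℝ, 1 ≤ r →
        (∀ lam ∈ GaborLambda, ε * r ^ (-(1:ℝ)/2) <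
            ‖(r : ℂ) * Complex.exp (Complex.I * θ) - lam‖) →
        c * Real.exp (π / 2 * r ^ 2 * |Real.sin (2 * θ)|) ≤
            ‖s ((r : ℂ) * Complex.exp (Complex.I * θ))‖ ∧
        ‖s ((r : ℂ) * Complex.exp (Complex.I * θ))‖ ≤
            C * Real.exp (π / 2 * r ^ 2 * |Real.sin (2 * θ)|) := by
  refine ⟨min (1 / 2) (ε / 2) * min (1 / 4) (min 1 ε / Real.exp 1), 2, by positivity, ?_, ?_⟩
  · calc _ ≤ 1 / 2 * (1 / 4 : ℝ) := by gcongr <;> exact min_le_left _ _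
      _ ≤ 2 := by norm_num
  intro r θ hr hdist
  set z := (r : ℂ) * Complex.exp (I * θ)
  have hz : ‖z‖ = r := norm_ofReal_mul_exp_I_mul (by linarith) θ
  have hz2 : 1 ≤ ‖z ^ 2‖ := by rw [norm_pow, hz]; exact one_le_pow₀ hr
  have hs : ‖s z‖ = ‖z ^ 2 - 1‖ / ‖z ^ 2‖ * ‖Complex.sin (π * z ^ 2 / 2)‖ := by
    rw [hs_eq z (norm_pos_iff.mp (by linarith)), norm_mul, norm_div]
  have hz1 : ε ≤ ‖z ^ 2 - 1‖ := by
    simpa using le_norm_sq_sub_sq (a := 1) hε.le hr hz (hdist 1 (by simp [GaborLambda]))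
      (by simpa using hdist (-1) (by simp [GaborLambda]))
  rw [hs, ← abs_im_pi_mul_sq_div_two, mul_assoc]
  exact ⟨mul_le_mul (min_le_norm_sub_one_div_norm hz2 hz1)
      (le_norm_sin_pi_mul_div_two (by positivity) (le_norm_sq_sub_two_mul_int hε.le hr hz hdist))
      (by positivity) (by positivity),
    mul_le_mul (norm_sub_one_div_norm_le_two hz2) (Complex.norm_sin_le_exp_abs_im _)
      (norm_nonneg _) (by norm_num)⟩

/-- Two-sided estimate for |s(re^{iθ})| away from the zero set Λ:
for each ε > 0 there are 0 < c ≤ C with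
c·exp((π/2)r²|sin 2θ|) ≤ |s(re^{iθ})| ≤ C·exp((π/2)r²|sin 2θ|)
whenever r ≥ 1 and dist(re^{iθ}, Λ) > ε r^{−1/2}. -/
theorem s_estimate_away_from_zeros (s : ℂ → ℂ) (hs : Differentiable ℂ s)
    (hs_eq : ∀ z : ℂ, z ≠ 0 → s z = (z ^ 2 - 1) / z ^ 2 * Complex.sin (π * z ^ 2 / 2))
    (ε : ℝ) (hε : 0 < ε) :
    ∃ c C : ℝ, 0 < c ∧ c ≤ C ∧
      ∀ r θ : ℝ, 1 ≤ r →
        (∀ lam ∈ GaborLambda, ε * r ^ (-(1:ℝ)/2) <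
            ‖(r : ℂ) * Complex.exp (Complex.I * θ) - lam‖) →
        c * Real.exp (π / 2 * r ^ 2 * |Real.sin (2 * θ)|) ≤
            ‖s ((r : ℂ) * Complex.exp (Complex.I * θ))‖ ∧
        ‖s ((r : ℂ) * Complex.exp (Complex.I * θ))‖ ≤
            C * Real.exp (π / 2 * r ^ 2 * |Real.sin (2 * θ)|) :=
  s_estimate_away_from_zeros_general s hs_eq ε hε
end

section
/- The entire function s(z) = (z² − 1)·z^{−2}·sin(π z²/2) satisfies |s(r e^{i(π/4 + kπ/2)})| ≍ exp((π/2) r²) for k = 0,1,2,3 and r > 0, i.e. there are positive constants c, C with c·exp((π/2) r²) ≤ |s(r e^{i(π/4+kπ/2)})| ≤ C·exp((π/2) r²). -/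
/-!
On the diagonals z² = ±i r², so sin(πz²/2) = ±i sinh(πr²/2) and |z² − 1| = √(1 + r⁴). Hence
|s(z)| = e^{πr²/2} · √(1 + r⁴)/r² · (1 − e^{−πr²})/2, and the last factor lies in [1/4, (1 + π)/2]
because x/(1 + x) ≤ 1 − e^{−x} ≤ min(x, 1) and (1 + r²)/2 ≤ √(1 + r⁴) ≤ 1 + r².
-/

open Complex Real

namespace Real

lemma one_sub_exp_neg_le (x : ℝ) : 1 - exp (-x) ≤ x := by
  linarith [add_one_le_exp (-x)]

lemma div_one_add_le_one_sub_exp_neg {x : ℝ} (hx : 0 ≤ x) : x / (1 + x) ≤ 1 - exp (-x) := by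
  calc x / (1 + x) = 1 - (1 + x)⁻¹ := by field_simp; ring
    _ ≤ 1 - (exp x)⁻¹ := by gcongr; linarith [add_one_le_exp x]
    _ = 1 - exp (-x) := by rw [exp_neg]

lemma sinh_eq_exp_mul (x : ℝ) : sinh x = exp x * ((1 - exp (-(2 * x))) / 2) := by
  rw [sinh_eq, show -(2 * x) = -x + -x by ring, exp_add, mul_div_assoc', mul_sub,
    ← mul_assoc, ← exp_add, add_neg_cancel, exp_zero, one_mul, mul_one]

lemma one_add_div_two_le_sqrt_one_add_sq (a : ℝ) : (1 + a) / 2 ≤ √(1 + a ^ 2) :=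
  (le_abs_self _).trans (abs_le_sqrt (by nlinarith [sq_nonneg (a - 1)]))

lemma sqrt_one_add_sq_le {a : ℝ} (ha : 0 ≤ a) : √(1 + a ^ 2) ≤ 1 + a :=
  sqrt_le_iff.2 ⟨by positivity, by nlinarith⟩

end Real

lemma one_div_four_le_sqrt_one_add_sq_div_mul_one_sub_exp_neg {a : ℝ} (ha : 0 < a) :
    1 / 4 ≤ √(1 + a ^ 2) / a * ((1 - Real.exp (-(π * a))) / 2) := by
  have hπa : 0 ≤ π * a := by positivity
  calc 1 / 4 ≤ π * (1 + a) / (4 * (1 + π * a)) := by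
        rw [div_le_div_iff₀ (by norm_num) (by positivity)]
        nlinarith [one_le_pi_div_two, pi_pos]
    _ = (1 + a) / 2 / a * (π * a / (1 + π * a) / 2) := by field_simp; norm_num
    _ ≤ √(1 + a ^ 2) / a * ((1 - Real.exp (-(π * a))) / 2) := by
        gcongr
        · exact one_add_div_two_le_sqrt_one_add_sq a
        · exact div_one_add_le_one_sub_exp_neg hπa

lemma sqrt_one_add_sq_div_mul_one_sub_exp_neg_le {a : ℝ} (ha : 0 < a) :
    √(1 + a ^ 2) / a * ((1 - Real.exp (-(π * a))) / 2) ≤ (1 + π) / 2 := by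
  have hpos : 0 ≤ 1 - Real.exp (-(π * a)) := by
    linarith [exp_le_one_iff.2 (neg_nonpos.2 (by positivity : 0 ≤ π * a))]
  calc √(1 + a ^ 2) / a * ((1 - Real.exp (-(π * a))) / 2)
      ≤ (1 + a) / a * ((1 - Real.exp (-(π * a))) / 2) := by
        gcongr; exact sqrt_one_add_sq_le ha.le
    _ = (1 - Real.exp (-(π * a))) / a / 2 + (1 - Real.exp (-(π * a))) / 2 := by field_simp
    _ ≤ π / 2 + 1 / 2 := by
        gcongr
        · exact div_le_of_le_mul₀ ha.le pi_pos.le (one_sub_exp_neg_le _)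
        · linarith [exp_pos (-(π * a))]
    _ = (1 + π) / 2 := by ring

lemma sqrt_one_add_sq_div_mul_sinh_bounds {a : ℝ} (ha : 0 < a) :
    1 / 4 * Real.exp (π / 2 * a) ≤ √(1 + a ^ 2) / a * Real.sinh (π / 2 * a) ∧
      √(1 + a ^ 2) / a * Real.sinh (π / 2 * a) ≤ (1 + π) / 2 * Real.exp (π / 2 * a) := by
  rw [sinh_eq_exp_mul, show 2 * (π / 2 * a) = π * a by ring, mul_left_comm]
  constructor
  · rw [mul_comm (1 / 4)]
    gcongr
    exact one_div_four_le_sqrt_one_add_sq_div_mul_one_sub_exp_neg ha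
  · rw [mul_comm ((1 + π) / 2)]
    gcongr
    exact sqrt_one_add_sq_div_mul_one_sub_exp_neg_le ha

lemma exp_diagonal_sq (n : ℕ) :
    Complex.exp (I * (π / 4 + n * (π / 2))) ^ 2 = (-1) ^ n * I := by
  rw [← Complex.exp_nat_mul, show ((2 : ℕ) : ℂ) * (I * (π / 4 + n * (π / 2)))
      = π / 2 * I + n * (π * I) by push_cast; ring,
    Complex.exp_add, Complex.exp_nat_mul, exp_pi_mul_I, exp_pi_div_two_mul_I, mul_comm]

lemma ofReal_mul_exp_diagonal_sq (r : ℝ) (n : ℕ) :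
    ((r : ℂ) * Complex.exp (I * (π / 4 + n * (π / 2)))) ^ 2 = (((-1) ^ n * r ^ 2 : ℝ) : ℂ) * I := by
  rw [mul_pow, exp_diagonal_sq]
  push_cast
  ring

lemma norm_mul_I_sub_one_div_mul_sin (y : ℝ) :
    ‖(y * I - 1) / (y * I) * Complex.sin (π * (y * I) / 2)‖
      = √(1 + y ^ 2) / |y| * Real.sinh (π / 2 * |y|) := by
  have hnum : (y : ℂ) * I - 1 = ((-1 : ℝ) : ℂ) + y * I := by push_cast; ring
  have harg : (π : ℂ) * (y * I) / 2 = ((π / 2 * y : ℝ) : ℂ) * I := by push_cast; ring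
  rw [norm_mul, norm_div, hnum, norm_add_mul_I, harg, Complex.sin_mul_I, ← ofReal_sinh,
    norm_mul, norm_mul, norm_I, mul_one, mul_one, norm_real, norm_real, norm_eq_abs,
    norm_eq_abs, abs_sinh, abs_mul, abs_of_pos (by positivity : 0 < π / 2)]
  norm_num

theorem s_estimate_on_diagonals_general (s : ℂ → ℂ)
    (hs_eq : ∀ z : ℂ, z ≠ 0 → s z = (z ^ 2 - 1) / z ^ 2 * Complex.sin (π * z ^ 2 / 2)) :
    ∃ c C : ℝ, 0 < c ∧ c ≤ C ∧
      ∀ (k : Fin 4) (r : ℝ), 0 < r →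
        c * Real.exp (π / 2 * r ^ 2) ≤
          ‖s ((r : ℂ) * Complex.exp (Complex.I * (π / 4 + (k : ℕ) * (π / 2))))‖ ∧
        ‖s ((r : ℂ) * Complex.exp (Complex.I * (π / 4 + (k : ℕ) * (π / 2))))‖ ≤
          C * Real.exp (π / 2 * r ^ 2) := by
  refine ⟨1 / 4, (1 + π) / 2, by norm_num, by linarith [pi_gt_three], fun k r hr => ?_⟩
  have hz : (r : ℂ) * Complex.exp (I * (π / 4 + (k : ℕ) * (π / 2))) ≠ 0 :=
    mul_ne_zero (ofReal_ne_zero.2 hr.ne') (Complex.exp_ne_zero _)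
  have hy : |(-1) ^ (k : ℕ) * r ^ 2| = r ^ 2 := by simp
  rw [hs_eq _ hz, ofReal_mul_exp_diagonal_sq, norm_mul_I_sub_one_div_mul_sin,
    ← sq_abs ((-1) ^ (k : ℕ) * r ^ 2), hy]
  exact sqrt_one_add_sq_div_mul_sinh_bounds (by positivity)

/-- On the diagonal rays θ = π/4 + kπ/2, |s(re^{iθ})| ≍ exp((π/2)r²), where
s(z) = (z²−1) z^{−2} sin(πz²/2). -/
theorem s_estimate_on_diagonals (s : ℂ → ℂ) (hs : Differentiable ℂ s)
    (hs_eq : ∀ z : ℂ, z ≠ 0 → s z = (z ^ 2 - 1) / z ^ 2 * Complex.sin (π * z ^ 2 / 2)) :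
    ∃ c C : ℝ, 0 < c ∧ c ≤ C ∧
      ∀ (k : Fin 4) (r : ℝ), 0 < r →
        c * Real.exp (π / 2 * r ^ 2) ≤
          ‖s ((r : ℂ) * Complex.exp (Complex.I * (π / 4 + (k : ℕ) * (π / 2))))‖ ∧
        ‖s ((r : ℂ) * Complex.exp (Complex.I * (π / 4 + (k : ℕ) * (π / 2))))‖ ≤
          C * Real.exp (π / 2 * r ^ 2) :=
  s_estimate_on_diagonals_general s hs_eq
end

section
/- Every function F in the Fock space satisfies |F(z)| = o(exp((π/2)|z|²)) as |z| → ∞; that is, for every ε > 0 there is R such that |F(z)| ≤ ε·exp((π/2)|z|²) for all |z| ≥ R. -/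
/-!
Multiplying `F` by `exp (-π z̄ w)` moves the Gaussian weight from `0` to `z`:
`|F w · exp (-π z̄ w)|² = exp (π |w - z|² - π |z|²) · |F w|² exp (-π |w|²)`.
The sub-mean-value property of the entire function `(F w · exp (-π z̄ w))²` on the unit disc
around `z` therefore bounds `|F z|² exp (-π |z|²)` by `e^π / π` times the Fock integral over
that disc, and this integral tends to `0` as `|z| → ∞` because the Fock integrand is integrable.
-/

open Complex Real MeasureTheory Metric Set Filter Topology ComplexConjugate

section

variable {E : Type*} [NormedAddCommGroup E] [NormedSpace ℝ E]

theorem setIntegral_ball_eq_intervalIntegral_circleAverage {f : ℂ → E} (hf : Continuous f)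
    (c : ℂ) {r : ℝ} (hr : 0 ≤ r) :
    ∫ w in ball c r, f w = ∫ s in 0..r, (2 * π * s) • circleAverage f c s := by
  have h_translate : ∫ w in ball c r, f w = ∫ w, (ball 0 r).indicator (fun w ↦ f (c + w)) w := by
    rw [← integral_indicator measurableSet_ball, ← integral_add_left_eq_self _ c]
    congr 1 with w
    simp [indicator, mem_ball, dist_eq_norm]
  have h_polar : ∫ w, (ball 0 r).indicator (fun w ↦ f (c + w)) w =
      ∫ p in Ioo 0 r ×ˢ Ioo (-π) π, p.1 • f (circleMap c p.1 p.2) := by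
    rw [← Complex.integral_comp_polarCoord_symm, ← integral_indicator
      (measurableSet_Ioo.prod measurableSet_Ioo), ← integral_indicator
      polarCoord.open_target.measurableSet]
    have h_circleMap (p : ℝ × ℝ) : c + Complex.polarCoord.symm p = circleMap c p.1 p.2 := by
      rw [Complex.polarCoord_symm_apply, circleMap, Complex.exp_mul_I]
      push_cast
      ring
    congr 1 with ⟨s, θ⟩
    simp only [indicator, polarCoord_target, mem_prod, mem_Ioi, mem_Ioo, mem_ball_zero_iff,
      norm_polarCoord_symm, h_circleMap, smul_ite, smul_zero]
    split_ifs <;> grind [abs_of_pos]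
  have h_integrable : IntegrableOn (fun p : ℝ × ℝ ↦ p.1 • f (circleMap c p.1 p.2))
      (Ioo 0 r ×ˢ Ioo (-π) π) :=
    ((by fun_prop : Continuous fun p : ℝ × ℝ ↦ p.1 • f (circleMap c p.1 p.2)).continuousOn
      |>.integrableOn_compact (isCompact_Icc.prod isCompact_Icc)).mono_set
      (prod_mono Ioo_subset_Icc_self Ioo_subset_Icc_self)
  rw [h_translate, h_polar, Measure.volume_eq_prod, setIntegral_prod _ h_integrable,
    intervalIntegral.integral_of_le hr, integral_Ioc_eq_integral_Ioo]
  refine setIntegral_congr_fun measurableSet_Ioo fun s _ ↦ ?_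
  -- by periodicity, the angles `(-π, π)` of polar coordinates may replace `[0, 2π]`
  rw [circleAverage_eq_integral_add (-π), intervalIntegral.integral_comp_add_right
    (fun θ ↦ f (circleMap c s θ)), smul_smul, integral_smul, ← integral_Ioc_eq_integral_Ioo,
    ← intervalIntegral.integral_of_le (by linarith [pi_pos])]
  congr 1
  · field_simp
  · congr 1 <;> ring

theorem norm_circleAverage_le {f : ℂ → E} (c : ℂ) (R : ℝ) :
    ‖circleAverage f c R‖ ≤ circleAverage (‖f ·‖) c R := by
  rw [circleAverage_def, circleAverage_def, norm_smul, smul_eq_mul, Real.norm_of_nonneg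
    (inv_pos.2 two_pi_pos).le]
  gcongr
  exact intervalIntegral.norm_integral_le_integral_norm two_pi_pos.le

theorem Differentiable.norm_le_circleAverage_norm {F : Type*} [NormedAddCommGroup F]
    [NormedSpace ℂ F] [CompleteSpace F] {f : ℂ → F} (hf : Differentiable ℂ f) (c : ℂ) (R : ℝ) :
    ‖f c‖ ≤ circleAverage (‖f ·‖) c R := by
  rw [← hf.diffContOnCl.circleAverage]
  exact norm_circleAverage_le c R

theorem Differentiable.mul_norm_le_setIntegral_norm_ball {F : Type*} [NormedAddCommGroup F]
    [NormedSpace ℂ F] [CompleteSpace F] {f : ℂ → F} (hf : Differentiable ℂ f) (c : ℂ) {r : ℝ}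
    (hr : 0 ≤ r) : π * r ^ 2 * ‖f c‖ ≤ ∫ w in ball c r, ‖f w‖ := by
  have hfc := hf.continuous
  rw [setIntegral_ball_eq_intervalIntegral_circleAverage (by fun_prop) c hr]
  calc π * r ^ 2 * ‖f c‖ = ∫ s in 0..r, 2 * π * s * ‖f c‖ := by
        rw [intervalIntegral.integral_mul_const, intervalIntegral.integral_const_mul, integral_id]
        ring
    _ ≤ ∫ s in 0..r, (2 * π * s) • circleAverage (‖f ·‖) c s := by
        refine intervalIntegral.integral_mono_on hr
          ((by fun_prop : Continuous _).intervalIntegrable _ _)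
          ((by fun_prop : Continuous _).intervalIntegrable _ _) fun s hs ↦ ?_
        exact mul_le_mul_of_nonneg_left (hf.norm_le_circleAverage_norm c s)
          (mul_nonneg two_pi_pos.le hs.1)

theorem tendsto_setIntegral_compl_closedBall {X : Type*} [PseudoMetricSpace X] [MeasurableSpace X]
    [OpensMeasurableSpace X] {μ : Measure X} {f : X → E} (hf : Integrable f μ) (x : X) :
    Tendsto (fun R : ℝ ↦ ∫ y in (closedBall x R)ᶜ, f y ∂μ) atTop (𝓝 0) := by
  have h_empty : ⋂ R : ℝ, (closedBall x R)ᶜ = ∅ := by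
    rw [← compl_iUnion, compl_empty_iff, eq_univ_iff_forall]
    exact fun y ↦ mem_iUnion.2 ⟨dist y x, mem_closedBall.2 le_rfl⟩
  simpa [h_empty] using tendsto_setIntegral_of_antitone (s := fun R ↦ (closedBall x R)ᶜ)
    (fun R ↦ measurableSet_closedBall.compl) (fun R R' h ↦ compl_subset_compl.2 (closedBall_subset_closedBall h)) ⟨0, hf.integrableOn⟩

end

theorem norm_sq_mul_cexp_neg_pi_conj_mul (f : ℂ → ℂ) (z w : ℂ) :
    ‖(f w * cexp (-π * conj z * w)) ^ 2‖ =
      rexp (π * ‖w - z‖ ^ 2 - π * ‖z‖ ^ 2) * (‖f w‖ ^ 2 * rexp (-π * ‖w‖ ^ 2)) := by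
  rw [norm_pow, norm_mul, mul_pow, Complex.norm_exp, ← Real.exp_nat_mul, mul_left_comm,
    ← Real.exp_add]
  congr 2
  simp only [Complex.sq_norm, Complex.normSq_sub]
  rw [mul_assoc, mul_comm (conj z) w, ← ofReal_neg, re_ofReal_mul]
  push_cast
  ring

theorem Differentiable.sq_norm_mul_exp_le_setIntegral_ball {f : ℂ → ℂ} (hf : Differentiable ℂ f)
    (z : ℂ) {r : ℝ} (hr : 0 < r) :
    ‖f z‖ ^ 2 * rexp (-π * ‖z‖ ^ 2) ≤
      rexp (π * r ^ 2) / (π * r ^ 2) * ∫ w in ball z r, ‖f w‖ ^ 2 * rexp (-π * ‖w‖ ^ 2) := by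
  set g : ℂ → ℝ := fun w ↦ ‖f w‖ ^ 2 * rexp (-π * ‖w‖ ^ 2)
  have hfc := hf.continuous
  have h_mean := (show Differentiable ℂ fun w ↦ (f w * cexp (-π * conj z * w)) ^ 2 by fun_prop)
    |>.mul_norm_le_setIntegral_norm_ball z hr.le
  have h_ball : ∀ w ∈ ball z r, ‖(f w * cexp (-π * conj z * w)) ^ 2‖ ≤
      rexp (π * r ^ 2 - π * ‖z‖ ^ 2) * g w := by
    intro w hw
    rw [norm_sq_mul_cexp_neg_pi_conj_mul]
    gcongr
    rw [mem_ball, dist_eq_norm] at hw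
    gcongr
  have h_integral : ∫ w in ball z r, ‖(f w * cexp (-π * conj z * w)) ^ 2‖ ≤
      rexp (π * r ^ 2 - π * ‖z‖ ^ 2) * ∫ w in ball z r, g w := by
    rw [← integral_const_mul]
    refine setIntegral_mono_on ?_ ?_ measurableSet_ball h_ball <;>
    exact ((by fun_prop : Continuous _).continuousOn.integrableOn_compact
      (isCompact_closedBall z r)).mono_set ball_subset_closedBall
  have h_center : ‖(f z * cexp (-π * conj z * z)) ^ 2‖ = rexp (-π * ‖z‖ ^ 2) * g z := by
    rw [norm_sq_mul_cexp_neg_pi_conj_mul, sub_self, norm_zero]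
    congr 2
    ring
  rw [div_mul_eq_mul_div, le_div_iff₀ (by positivity)]
  refine le_of_mul_le_mul_left ?_ (exp_pos (-π * ‖z‖ ^ 2))
  calc rexp (-π * ‖z‖ ^ 2) * (g z * (π * r ^ 2))
      = π * r ^ 2 * ‖(f z * cexp (-π * conj z * z)) ^ 2‖ := by rw [h_center]; ring
    _ ≤ rexp (π * r ^ 2 - π * ‖z‖ ^ 2) * ∫ w in ball z r, g w := h_mean.trans h_integral
    _ = rexp (-π * ‖z‖ ^ 2) * (rexp (π * r ^ 2) * ∫ w in ball z r, g w) := by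
      rw [sub_eq_add_neg, Real.exp_add, neg_mul]; ring

theorem le_mul_exp_of_sq_mul_exp_neg_le {a ε c t : ℝ} (ha : 0 ≤ a) (hε : 0 ≤ ε)
    (h : a ^ 2 * rexp (-c * t ^ 2) ≤ ε ^ 2) : a ≤ ε * rexp (c / 2 * t ^ 2) := by
  have h_sq : rexp (c / 2 * t ^ 2) ^ 2 = rexp (c * t ^ 2) := by
    rw [← Real.exp_nat_mul]
    congr 1
    push_cast
    ring
  rw [← pow_le_pow_iff_left₀ ha (by positivity) two_ne_zero, mul_pow, h_sq]
  calc a ^ 2 = a ^ 2 * rexp (-c * t ^ 2) * rexp (c * t ^ 2) := by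
        rw [mul_assoc, ← Real.exp_add, neg_mul, neg_add_cancel, Real.exp_zero, mul_one]
    _ ≤ ε ^ 2 * rexp (c * t ^ 2) := by gcongr

/-- Every function F in the Fock space satisfies |F(z)| = o(exp((π/2)|z|²)) as |z| → ∞. -/
theorem fock_space_little_o (F : ℂ → ℂ) (hF : Differentiable ℂ F)
    (hFock : Integrable (fun z : ℂ => ‖F z‖ ^ 2 * Real.exp (-π * ‖z‖ ^ 2))) :
    ∀ ε > 0, ∃ R : ℝ, ∀ z : ℂ, R ≤ ‖z‖ →
      ‖F z‖ ≤ ε * Real.exp (π / 2 * ‖z‖ ^ 2) := by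
  intro ε hε
  set g : ℂ → ℝ := fun w ↦ ‖F w‖ ^ 2 * rexp (-π * ‖w‖ ^ 2)
  obtain ⟨R, h_tail⟩ := eventually_atTop.1 <|
    (tendsto_setIntegral_compl_closedBall hFock 0).eventually
      (gt_mem_nhds (show 0 < ε ^ 2 * π / rexp π by positivity))
  refine ⟨R + 1, fun z hz ↦ le_mul_exp_of_sq_mul_exp_neg_le (norm_nonneg _) hε.le ?_⟩
  have h_ball : ball z 1 ⊆ (closedBall 0 R)ᶜ := fun w hw ↦ by
    rw [mem_compl_iff, mem_closedBall_zero_iff, not_le]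
    linarith [norm_le_norm_add_norm_sub' z w, mem_ball'.1 hw, dist_eq_norm z w]
  calc g z ≤ rexp π / π * ∫ w in ball z 1, g w := by
        simpa only [one_pow, mul_one] using hF.sq_norm_mul_exp_le_setIntegral_ball z one_pos
    _ ≤ rexp π / π * ∫ w in (closedBall 0 R)ᶜ, g w := by
        gcongr
        · exact .of_forall fun w ↦ by positivity
        · exact hFock.integrableOn
    _ ≤ rexp π / π * (ε ^ 2 * π / rexp π) := by gcongr; exact (h_tail R le_rfl).le
    _ = ε ^ 2 := by field_simp
end

section
/- Let h : ℝ → ℝ be a 2-trigonometrically convex function (the indicator of an entire function of order 2). If h has a local maximum at θ₀, then h(θ) ≥ h(θ₀)·cos(2(θ − θ₀)) for all θ with |θ − θ₀| ≤ π/4. -/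
/-!
Apply convexity to the triple `θ₀ - ε < θ₀ < θ₀ + a` and bound `h (θ₀ - ε) ≤ h θ₀`. The
identity `sin (x + y) - sin x = sin y * (cos x - sin x * tan (y / 2))` turns the result into
`h θ₀ * (cos (ρ a) - sin (ρ a) * tan (ρ ε / 2)) ≤ h (θ₀ + a)`, and `ε → 0⁺` gives the bound
for `θ > θ₀`; reflecting `h` in `θ₀` gives it for `θ < θ₀`.
-/

open Real Filter Topology

/-- `ρ`-trigonometric convexity; for `ρ = 2` the window `ρ * (θ₃ - θ₁) < π` is the paper's
`θ₃ - θ₁ < π / 2`. -/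
def IsTrigConvex (ρ : ℝ) (h : ℝ → ℝ) : Prop :=
  ∀ θ₁ θ₂ θ₃ : ℝ, θ₁ < θ₂ → θ₂ < θ₃ → ρ * (θ₃ - θ₁) < π →
    h θ₂ * sin (ρ * (θ₃ - θ₁)) ≤ h θ₁ * sin (ρ * (θ₃ - θ₂)) + h θ₃ * sin (ρ * (θ₂ - θ₁))

theorem Real.sin_add_sub_sin_eq (x y : ℝ) (hy : cos (y / 2) ≠ 0) :
    sin (x + y) - sin x = sin y * (cos x - sin x * tan (y / 2)) := by
  have hsin : sin y = 2 * sin (y / 2) * cos (y / 2) := by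
    rw [← sin_two_mul]; ring_nf
  have hcos : cos y = 1 - 2 * sin (y / 2) ^ 2 := by
    have := cos_two_mul (y / 2)
    rw [mul_div_cancel₀ y two_ne_zero] at this
    linarith [sin_sq_add_cos_sq (y / 2)]
  rw [sin_add, hsin, hcos, tan_eq_sin_div_cos]
  field_simp
  ring

namespace IsTrigConvex

variable {ρ : ℝ} {h : ℝ → ℝ}

theorem comp_neg (hh : IsTrigConvex ρ h) : IsTrigConvex ρ (fun x ↦ h (-x)) := by
  intro θ₁ θ₂ θ₃ h₁₂ h₂₃ hπ
  have := hh (-θ₃) (-θ₂) (-θ₁) (by linarith) (by linarith) (by linarith)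
  rw [show -θ₁ - -θ₃ = θ₃ - θ₁ by ring, show -θ₁ - -θ₂ = θ₂ - θ₁ by ring,
    show -θ₂ - -θ₃ = θ₃ - θ₂ by ring] at this
  linarith

theorem mul_cos_sub_sin_mul_tan_le (hh : IsTrigConvex ρ h) (hρ : 0 < ρ) {θ₀ a ε : ℝ}
    (ha : 0 < a) (hε : 0 < ε) (hπ : ρ * (a + ε) < π) (hleft : h (θ₀ - ε) ≤ h θ₀) :
    h θ₀ * (cos (ρ * a) - sin (ρ * a) * tan (ρ * ε / 2)) ≤ h (θ₀ + a) := by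
  have hconv := hh (θ₀ - ε) θ₀ (θ₀ + a) (by linarith) (by linarith)
    (by rwa [show θ₀ + a - (θ₀ - ε) = a + ε by ring])
  rw [show θ₀ + a - (θ₀ - ε) = a + ε by ring, show θ₀ + a - θ₀ = a by ring,
    show θ₀ - (θ₀ - ε) = ε by ring] at hconv
  have hsin_a : 0 ≤ sin (ρ * a) := sin_nonneg_of_nonneg_of_le_pi (by positivity) (by nlinarith)
  have hsin_ε : 0 < sin (ρ * ε) := sin_pos_of_pos_of_lt_pi (by positivity) (by nlinarith)
  have hcos_ε : cos (ρ * ε / 2) ≠ 0 :=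
    (cos_pos_of_mem_Ioo ⟨by linarith [pi_pos, mul_pos hρ hε], by nlinarith⟩).ne'
  have hid := sin_add_sub_sin_eq (ρ * a) (ρ * ε) hcos_ε
  refine le_of_mul_le_mul_left ?_ hsin_ε
  calc sin (ρ * ε) * (h θ₀ * (cos (ρ * a) - sin (ρ * a) * tan (ρ * ε / 2)))
      = h θ₀ * sin (ρ * (a + ε)) - h θ₀ * sin (ρ * a) := by rw [mul_add, ← mul_sub, hid]; ring
    _ ≤ h (θ₀ - ε) * sin (ρ * a) + h (θ₀ + a) * sin (ρ * ε) - h θ₀ * sin (ρ * a) := by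
        linarith
    _ ≤ sin (ρ * ε) * h (θ₀ + a) := by linarith [mul_le_mul_of_nonneg_right hleft hsin_a]

theorem mul_cos_le_of_isLocalMax (hh : IsTrigConvex ρ h) (hρ : 0 < ρ) {θ₀ a : ℝ}
    (hmax : IsLocalMax h θ₀) (ha : 0 ≤ a) (hπ : ρ * a < π) :
    h θ₀ * cos (ρ * a) ≤ h (θ₀ + a) := by
  rcases ha.eq_or_lt with rfl | ha
  · simp
  have hleft : ∀ᶠ ε in 𝓝[>] 0, h (θ₀ - ε) ≤ h θ₀ :=
    nhdsWithin_le_nhds <| (continuous_const.sub continuous_id).tendsto' 0 θ₀ (sub_zero θ₀) hmax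
  have hsmall : ∀ᶠ ε in 𝓝[>] (0 : ℝ), ρ * (a + ε) < π :=
    nhdsWithin_le_nhds <| (continuous_const.mul (continuous_const.add continuous_id)).tendsto' 0
      (ρ * a) (by simp) (Iio_mem_nhds hπ)
  have hlim : Tendsto (fun ε ↦ h θ₀ * (cos (ρ * a) - sin (ρ * a) * tan (ρ * ε / 2)))
      (𝓝[>] 0) (𝓝 (h θ₀ * cos (ρ * a))) := by
    have htan : ContinuousAt (fun ε ↦ tan (ρ * ε / 2)) 0 :=
      (continuousAt_tan.mpr (by simp)).comp (by fun_prop)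
    have : ContinuousAt (fun ε ↦ h θ₀ * (cos (ρ * a) - sin (ρ * a) * tan (ρ * ε / 2))) 0 :=
      continuousAt_const.mul (continuousAt_const.sub (continuousAt_const.mul htan))
    simpa using this.tendsto.mono_left nhdsWithin_le_nhds
  refine le_of_tendsto hlim ?_
  filter_upwards [hleft, hsmall, self_mem_nhdsWithin] with ε hεleft hεπ hε
  exact hh.mul_cos_sub_sin_mul_tan_le hρ ha hε hεπ hεleft

theorem mul_cos_le_of_isLocalMax_of_abs_lt (hh : IsTrigConvex ρ h) (hρ : 0 < ρ) {θ₀ θ : ℝ}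
    (hmax : IsLocalMax h θ₀) (hθ : ρ * |θ - θ₀| < π) :
    h θ₀ * cos (ρ * (θ - θ₀)) ≤ h θ := by
  rcases le_total θ₀ θ with hle | hle
  · rw [abs_of_nonneg (sub_nonneg.mpr hle)] at hθ
    simpa using hh.mul_cos_le_of_isLocalMax hρ hmax (sub_nonneg.mpr hle) hθ
  · rw [abs_of_nonpos (sub_nonpos.mpr hle), neg_sub] at hθ
    have hmax' : IsLocalMax (fun x ↦ h (-x)) (-θ₀) :=
      IsLocalMax.comp_continuous (by simpa using hmax) continuous_neg.continuousAt
    have := hh.comp_neg.mul_cos_le_of_isLocalMax hρ hmax' (sub_nonneg.mpr hle) hθ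
    rw [show ρ * (θ - θ₀) = -(ρ * (θ₀ - θ)) by ring, cos_neg]
    simpa using this

end IsTrigConvex

/-- If a 2-trigonometrically convex function h has a local maximum at θ₀, then
h(θ) ≥ h(θ₀)·cos(2(θ − θ₀)) for |θ − θ₀| ≤ π/4. -/
theorem trig_convex_local_max_bound (h : ℝ → ℝ)
    (hconv : ∀ θ₁ θ₂ θ₃ : ℝ, θ₁ < θ₂ → θ₂ < θ₃ → θ₃ - θ₁ < π / 2 →
      h θ₂ * Real.sin (2 * (θ₃ - θ₁)) ≤
        h θ₁ * Real.sin (2 * (θ₃ - θ₂)) + h θ₃ * Real.sin (2 * (θ₂ - θ₁)))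
    (θ₀ : ℝ) (hmax : IsLocalMax h θ₀) :
    ∀ θ : ℝ, |θ - θ₀| ≤ π / 4 → h θ₀ * Real.cos (2 * (θ - θ₀)) ≤ h θ := by
  have hh : IsTrigConvex 2 h := fun θ₁ θ₂ θ₃ h₁₂ h₂₃ hπ ↦ hconv θ₁ θ₂ θ₃ h₁₂ h₂₃ (by linarith)
  exact fun θ hθ ↦ hh.mul_cos_le_of_isLocalMax_of_abs_lt two_pos hmax (by linarith [pi_pos])
end

section
/- Let 0 ≤ θ₁ < θ₂ < ... < θ_n < 2π with θ_{n+1} = θ₁ + 2π and θ_{j+1} − θ_j ≤ π/2 for all j. Define the 2π-periodic function H(θ) by H(θ) = (π/2)·cos(2(θ_{j+1} − θ)) for θ'_j ≤ θ < θ'_{j+1}, where θ'_j = (θ_{j+1} + θ_j)/2 (midpoints). Then ∫₀^{2π} H(θ) dθ ≥ 2π, with equality when n = 4 and the θ_j are 0, π/2, π, 3π/2. -/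
/-!
Between consecutive midpoints `H` is one cosine arc peaking at `θ_{j+1}`, and its integral is
`(π/4)(sin g_j + sin g_{j+1})` in terms of the two adjacent gaps `g_j = θ_{j+1} - θ_j`. Over a
period every gap is counted twice, so `∫ H = (π/2) ∑ sin g_j`. As the gaps lie in `[0, π/2]`,
Jordan's inequality `sin g ≥ (2/π) g` gives `∑ sin g_j ≥ (2/π) ∑ g_j = 4`, with equality when every
gap is `π/2`.
-/

open Real intervalIntegral MeasureTheory Finset Function

theorem Finset.sum_range_succ_eq_of_eq {M : Type*} [AddCancelCommMonoid M] {n : ℕ} (f : ℕ → M)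
    (h : f n = f 0) : ∑ k ∈ range n, f (k + 1) = ∑ k ∈ range n, f k := by
  have := (sum_range_succ' f n).symm.trans (sum_range_succ f n)
  rwa [h, add_left_inj] at this

theorem Real.mul_sum_le_sum_sin {ι : Type*} {s : Finset ι} {x : ι → ℝ}
    (hx : ∀ i ∈ s, 0 ≤ x i ∧ x i ≤ π / 2) : 2 / π * ∑ i ∈ s, x i ≤ ∑ i ∈ s, sin (x i) := by
  rw [mul_sum]
  exact sum_le_sum fun i hi => mul_le_sin (hx i hi).1 (hx i hi).2

theorem four_le_sum_sin_sub_of_sub_le_pi_div_two {n : ℕ} {u : ℕ → ℝ}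
    (hgaps : ∀ k ∈ range n, 0 ≤ u (k + 1) - u k ∧ u (k + 1) - u k ≤ π / 2)
    (hturn : u n = u 0 + 2 * π) :
    4 ≤ ∑ k ∈ range n, sin (u (k + 1) - u k) := by
  calc (4 : ℝ) = 2 / π * (u n - u 0) := by rw [hturn]; field_simp; ring
    _ ≤ ∑ k ∈ range n, sin (u (k + 1) - u k) := by
      rw [← sum_range_sub]; exact mul_sum_le_sum_sin hgaps

theorem Function.Periodic.intervalIntegral_eq_sum {H : ℝ → ℝ} {T : ℝ} (hH : Periodic H T)
    {n : ℕ} {m : ℕ → ℝ} (hm : m n = m 0 + T)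
    (hint : ∀ k < n, IntervalIntegrable H volume (m k) (m (k + 1))) :
    ∫ t in (0 : ℝ)..T, H t = ∑ k ∈ range n, ∫ t in m k..m (k + 1), H t := by
  rw [sum_integral_adjacent_intervals hint, hm, hH.intervalIntegral_add_eq (m 0) 0, zero_add]

theorem integral_cos_two_mul_sub (a b c : ℝ) :
    ∫ t in a..b, cos (2 * (c - t)) = (sin (2 * (c - a)) - sin (2 * (c - b))) / 2 := by
  simp only [mul_sub, integral_comp_sub_mul _ two_ne_zero, integral_cos, smul_eq_mul]
  ring

theorem integral_cosine_arc {a b c : ℝ} (hac : a ≤ c) {H : ℝ → ℝ}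
    (hH : Set.EqOn H (fun t => π / 2 * cos (2 * (b - t))) (Set.Ico ((a + b) / 2) ((b + c) / 2))) :
    IntervalIntegrable H volume ((a + b) / 2) ((b + c) / 2) ∧
      ∫ t in (a + b) / 2..(b + c) / 2, H t = π / 4 * (sin (b - a) + sin (c - b)) := by
  have hle : (a + b) / 2 ≤ (b + c) / 2 := by linarith
  have hH' : Set.EqOn H (fun t => π / 2 * cos (2 * (b - t)))
      (Set.uIoo ((a + b) / 2) ((b + c) / 2)) := by
    rw [Set.uIoo_of_le hle]; exact hH.mono Set.Ioo_subset_Ico_self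
  refine ⟨(Continuous.intervalIntegrable (by fun_prop) _ _).congr_uIoo hH'.symm, ?_⟩
  rw [integral_congr_uIoo hH', intervalIntegral.integral_const_mul, integral_cos_two_mul_sub]
  have e1 : 2 * (b - (a + b) / 2) = b - a := by ring
  have e2 : 2 * (b - (b + c) / 2) = -(c - b) := by ring
  rw [e1, e2, sin_neg]
  ring

theorem integral_eq_half_pi_mul_sum_sin_gaps {n : ℕ} (hn : 1 ≤ n) {u : ℕ → ℝ} {T : ℝ}
    (hmono : ∀ k < n, u k ≤ u (k + 1)) (hper : ∀ k, u (k + n) = u k + T)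
    {H : ℝ → ℝ} (hHper : Periodic H T)
    (hH : ∀ k < n, ∀ t, (u k + u (k + 1)) / 2 ≤ t → t < (u (k + 1) + u (k + 2)) / 2 →
      H t = π / 2 * cos (2 * (u (k + 1) - t))) :
    ∫ t in (0 : ℝ)..T, H t = π / 2 * ∑ k ∈ range n, sin (u (k + 1) - u k) := by
  have hu₀ : u n = u 0 + T := by simpa using hper 0
  have hu₁ : u (n + 1) = u 1 + T := by rw [add_comm]; exact hper 1
  have hle : ∀ k < n, u k ≤ u (k + 2) := by
    intro k hk
    refine (hmono k hk).trans ?_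
    rcases (Nat.succ_le_of_lt hk).lt_or_eq with h | rfl
    · exact hmono (k + 1) h
    · rw [hu₀, hu₁]
      linarith [hmono 0 hn]
  have hpiece := fun k (hk : k < n) =>
    integral_cosine_arc (hle k hk) (H := H) fun t ht => hH k hk t ht.1 ht.2
  rw [hHper.intervalIntegral_eq_sum (m := fun k => (u k + u (k + 1)) / 2)
      (by simp only [hu₀, hu₁]; ring) fun k hk => (hpiece k hk).1,
    sum_congr rfl fun k hk => (hpiece k (mem_range.mp hk)).2, ← mul_sum, sum_add_distrib,
    sum_range_succ_eq_of_eq (fun k => sin (u (k + 1) - u k)) (by simp only [hu₀, hu₁]; ring_nf)]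
  ring

/-- For directions 0 ≤ θ₁ < ... < θ_n < 2π with gaps at most π/2 (extended
2π-periodically), the piecewise function H(θ) = (π/2)cos(2(θ_{j+1} − θ)) on
[(θ_j+θ_{j+1})/2, (θ_{j+1}+θ_{j+2})/2) satisfies ∫₀^{2π} H ≥ 2π, with equality
for the configuration 0, π/2, π, 3π/2. -/
theorem piecewise_cosine_integral_lower_bound (n : ℕ) (hn : 1 ≤ n) (θ : ℕ → ℝ)
    (h0 : 0 ≤ θ 1) (hlt : θ n < 2 * π)
    (hmono : ∀ j : ℕ, 1 ≤ j → j < n → θ j < θ (j + 1))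
    (hper : ∀ j : ℕ, 1 ≤ j → θ (j + n) = θ j + 2 * π)
    (hgap : ∀ j : ℕ, 1 ≤ j → j ≤ n → θ (j + 1) - θ j ≤ π / 2)
    (H : ℝ → ℝ) (hHper : Function.Periodic H (2 * π))
    (hH : ∀ j : ℕ, 1 ≤ j → j ≤ n → ∀ t : ℝ,
      (θ j + θ (j + 1)) / 2 ≤ t → t < (θ (j + 1) + θ (j + 2)) / 2 →
      H t = π / 2 * Real.cos (2 * (θ (j + 1) - t))) :
    (2 * π ≤ ∫ t in (0:ℝ)..(2 * π), H t) ∧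
    ((n = 4 ∧ θ 1 = 0 ∧ θ 2 = π / 2 ∧ θ 3 = π ∧ θ 4 = 3 * π / 2) →
      (∫ t in (0:ℝ)..(2 * π), H t) = 2 * π) := by
  set u : ℕ → ℝ := fun k => θ (k + 1)
  have hu_per (k : ℕ) : u (k + n) = u k + 2 * π := by
    simpa only [u, Nat.add_right_comm] using hper (k + 1) (by omega)
  have hu_mono : ∀ k < n, u k ≤ u (k + 1) := by
    intro k hk
    rcases (Nat.succ_le_of_lt hk).lt_or_eq with h | h
    · exact (hmono (k + 1) (by omega) h).le
    · subst h
      have hlast := hu_per 0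
      simp only [u, zero_add] at hlast ⊢
      linarith
  have hgaps : ∀ k ∈ range n, 0 ≤ u (k + 1) - u k ∧ u (k + 1) - u k ≤ π / 2 := fun k hk =>
    ⟨sub_nonneg.2 (hu_mono k (mem_range.1 hk)), hgap (k + 1) (by omega) (mem_range.1 hk)⟩
  have hintegral := integral_eq_half_pi_mul_sum_sin_gaps hn hu_mono hu_per hHper
    fun k hk => hH (k + 1) (by omega) hk
  refine ⟨?_, ?_⟩
  · have h4 := four_le_sum_sin_sub_of_sub_le_pi_div_two hgaps (by simpa using hu_per 0)
    rw [hintegral]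
    nlinarith [pi_pos]
  · rintro ⟨rfl, h1, h2, h3, h4⟩
    have h5 : θ 5 = 2 * π := by simpa [h1] using hper 1 le_rfl
    have hquarter : ∀ k ∈ range 4, u (k + 1) - u k = π / 2 := by
      intro k hk
      have := mem_range.1 hk
      interval_cases k <;> simp only [u] <;>
        norm_num [h1, h2, h3, h4, h5] <;> ring
    rw [hintegral, sum_congr rfl fun k hk => by rw [hquarter k hk, sin_pi_div_two]]
    norm_num
    ring
end
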